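/- For all integers b ≥ q ≥ 0, ∑_{r=q}^{b} h_{b−r}(α_0, α_1, …, α_r) · e_{r−q}(−α_0, −α_1, …, −α_{r−1}) equals 1 if q = b and equals 0 if q < b. (This family of identities is the coefficient-wise form, after expanding in powers of w and z, of the vacuum expectation value formula ⟨∅| ψ(z|α) ψ*(w|α) |∅⟩ = z/(z − w) for the deformed fermion fields, which is the key content of the deformed boson-fermion correspondence.) -/

import Mathlib

variable {R : Type*} [CommRing R]

/-- Elementary symmetric polynomial `e_m` of the entries of a list (zero for `m < 0`). -/
def esymL (l : List R) (m : ℤ) : R :=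
  if 0 ≤ m then
    ∑ s ∈ Finset.powersetCard m.toNat (Finset.univ : Finset (Fin l.length)), ∏ i ∈ s, l.get i
  else 0

/-- Complete homogeneous symmetric polynomial `h_m` of the entries of a list (zero for `m < 0`). -/
def hsymL (l : List R) (m : ℤ) : R :=
  if 0 ≤ m then
    ∑ s ∈ (Finset.univ : Finset (Fin l.length)).sym m.toNat, ((s.1).map l.get).prod
  else 0

/-- The list `f a, f (a+1), …, f b` (empty if `b < a`). -/
def intList (f : ℤ → R) (a b : ℤ) : List R :=
  (List.range (b + 1 - a).toNat).map (fun p => f (a + (p : ℤ)))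

/-- `e_m(f a, …, f b)`. -/
def eI (f : ℤ → R) (a b m : ℤ) : R := esymL (intList f a b) m

/-- `h_m(f a, …, f b)`. -/
def hI (f : ℤ → R) (a b m : ℤ) : R := hsymL (intList f a b) m

/-! With `L_r = (α_0, …, α_r)`, appending one variable changes `h` and `e` by
`h_m(L, x) = h_m(L) + x h_{m-1}(L, x)` and `e_m(L, x) = e_m(L) + x e_{m-1}(L)`. These recursions
make the partial sum over `q ≤ r ≤ k` equal to `∑_{j ≤ k - q} h_{b-q-j}(L_k) e_j(-L_k)`, a
truncation of the coefficient of `t^(b-q)` in `H_{L_k}(t) E_{L_k}(-t) = 1`. At `k = b` nothing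
is truncated, because `h` vanishes in negative degree. -/

open Finset

section CompleteHomogeneous

variable {ι S : Type*} [DecidableEq ι] [CommSemiring S]

def hsymmOn (s : Finset ι) (f : ι → S) (k : ℕ) : S :=
  ∑ t ∈ s.sym k, (t.1.map f).prod

theorem hsymmOn_zero (s : Finset ι) (f : ι → S) : hsymmOn s f 0 = 1 := by
  simp [hsymmOn, sym_zero]
  rfl

theorem hsymmOn_empty_succ (f : ι → S) (k : ℕ) : hsymmOn ∅ f (k + 1) = 0 := by
  simp [hsymmOn]

theorem hsymmOn_congr {s : Finset ι} {f g : ι → S} (h : ∀ i ∈ s, f i = g i) (k : ℕ) :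
    hsymmOn s f k = hsymmOn s g k :=
  sum_congr rfl fun _ ht =>
    congrArg _ <| Multiset.map_congr rfl fun i hi => h i (mem_sym_iff.1 ht i hi)

theorem hsymmOn_insert {a : ι} {s : Finset ι} (ha : a ∉ s) (f : ι → S) (k : ℕ) :
    hsymmOn (insert a s) f k = ∑ i ∈ range (k + 1), f a ^ i * hsymmOn s f (k - i) := by
  simp only [hsymmOn, mul_sum]
  rw [← sum_coe_sort ((insert a s).sym k), ← (symInsertEquiv ha).symm.sum_comp,
    Fintype.sum_sigma,
    ← Fin.sum_univ_eq_sum_range (fun i => ∑ t ∈ s.sym (k - i), f a ^ i * (t.1.map f).prod)]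
  refine Fintype.sum_congr _ _ fun i => ?_
  rw [← sum_coe_sort (s.sym (k - i))]
  refine Fintype.sum_congr _ _ fun t => ?_
  simp [symInsertEquiv, Sym.coe_fill, Sym.coe_replicate, mul_comm]

theorem hsymmOn_insert_succ {a : ι} {s : Finset ι} (ha : a ∉ s) (f : ι → S) (k : ℕ) :
    hsymmOn (insert a s) f (k + 1) = hsymmOn s f (k + 1) + f a * hsymmOn (insert a s) f k := by
  rw [hsymmOn_insert ha, hsymmOn_insert ha, sum_range_succ', mul_sum]
  simp [pow_succ, mul_assoc, mul_left_comm, add_comm]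

end CompleteHomogeneous

theorem Multiset.esymm_cons_succ {S : Type*} [CommSemiring S] (x : S) (s : Multiset S) (k : ℕ) :
    (x ::ₘ s).esymm (k + 1) = s.esymm (k + 1) + x * s.esymm k := by
  simp only [Multiset.esymm, Multiset.powersetCard_cons, Multiset.map_add, Multiset.sum_add,
    Multiset.map_map, Function.comp_def, Multiset.prod_cons, Multiset.sum_map_mul_left]

theorem esymL_eq_esymm (l : List R) {m : ℤ} (hm : 0 ≤ m) :
    esymL l m = (l : Multiset R).esymm m.toNat := by
  rw [esymL, if_pos hm, ← Finset.esymm_map_val, Fin.univ_val_map, List.ofFn_get]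

theorem esymL_of_neg (l : List R) {m : ℤ} (hm : m < 0) : esymL l m = 0 :=
  if_neg hm.not_ge

theorem esymL_zero (l : List R) : esymL l 0 = 1 := by
  simp [esymL_eq_esymm, Multiset.esymm]

theorem esymL_of_length_lt (l : List R) {m : ℤ} (hm : l.length < m) : esymL l m = 0 := by
  rw [esymL_eq_esymm l (by omega), Multiset.esymm,
    Multiset.powersetCard_eq_empty _ (by simp; omega)]
  simp

theorem esymL_append_singleton (l : List R) (x : R) (m : ℤ) :
    esymL (l ++ [x]) m = esymL l m + x * esymL l (m - 1) := by
  obtain hm | rfl | hm := lt_trichotomy m 0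
  · simp [esymL_of_neg, hm, show m - 1 < 0 by omega]
  · simp [esymL_zero, esymL_of_neg]
  · obtain ⟨k, rfl⟩ : ∃ k : ℕ, m = k + 1 := ⟨(m - 1).toNat, by omega⟩
    have hperm : ((l ++ [x] : List R) : Multiset R) = x ::ₘ l := by
      rw [Multiset.cons_coe, Multiset.coe_eq_coe]; exact List.perm_append_singleton x l
    rw [esymL_eq_esymm _ (by omega), esymL_eq_esymm _ (by omega), esymL_eq_esymm _ (by omega),
      hperm, show (k + 1 : ℤ).toNat = k + 1 by omega, show (k + 1 - 1 : ℤ).toNat = k by omega,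
      Multiset.esymm_cons_succ]

/-- Indexing by `range` rather than `Fin l.length` lets `l ++ [x]` reuse the indices of `l`. -/
theorem hsymL_eq_hsymmOn (l : List R) {m : ℤ} (hm : 0 ≤ m) :
    hsymL l m = hsymmOn (range l.length) (fun i => l.getD i 0) m.toNat := by
  rw [hsymL, if_pos hm, hsymmOn, ← Nat.Iio_eq_range, ← Fin.map_valEmbedding_univ, sym_map,
    sum_map]
  simp

theorem hsymL_of_neg (l : List R) {m : ℤ} (hm : m < 0) : hsymL l m = 0 :=
  if_neg hm.not_ge

theorem hsymL_zero (l : List R) : hsymL l 0 = 1 := by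
  rw [hsymL_eq_hsymmOn l le_rfl]; exact hsymmOn_zero _ _

theorem hsymL_nil {m : ℤ} (hm : m ≠ 0) : hsymL ([] : List R) m = 0 := by
  obtain hm | hm := hm.lt_or_gt
  · exact hsymL_of_neg _ hm
  · obtain ⟨k, rfl⟩ : ∃ k : ℕ, m = k + 1 := ⟨(m - 1).toNat, by omega⟩
    rw [hsymL_eq_hsymmOn _ (by omega), show (k + 1 : ℤ).toNat = k + 1 by omega]
    exact hsymmOn_empty_succ _ _

theorem hsymL_append_singleton (l : List R) (x : R) (m : ℤ) :
    hsymL (l ++ [x]) m = hsymL l m + x * hsymL (l ++ [x]) (m - 1) := by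
  obtain hm | rfl | hm := lt_trichotomy m 0
  · simp [hsymL_of_neg, hm, show m - 1 < 0 by omega]
  · simp [hsymL_zero, hsymL_of_neg]
  · obtain ⟨k, rfl⟩ : ∃ k : ℕ, m = k + 1 := ⟨(m - 1).toNat, by omega⟩
    have hlast : (l ++ [x]).getD l.length 0 = x := by simp
    have hinit : ∀ i ∈ range l.length, (l ++ [x]).getD i 0 = l.getD i 0 := fun i hi =>
      List.getD_append _ _ _ _ (mem_range.1 hi)
    rw [hsymL_eq_hsymmOn _ (by omega), hsymL_eq_hsymmOn _ (by omega),
      hsymL_eq_hsymmOn _ (by omega), show (k + 1 : ℤ).toNat = k + 1 by omega,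
      show (k + 1 - 1 : ℤ).toNat = k by omega,
      List.length_append, List.length_singleton, range_add_one,
      hsymmOn_insert_succ notMem_range_self, hlast, hsymmOn_congr hinit]

theorem intList_eq_map_range (f : ℤ → R) (a b : ℤ) :
    intList f a b = (List.range (b + 1 - a).toNat).map fun p : ℕ => f (a + p) := by
  simp [intList, ← List.map_eq_flatMap, Function.comp_def]

theorem intList_length (f : ℤ → R) (a b : ℤ) :
    (intList f a b).length = (b + 1 - a).toNat := by
  simp [intList_eq_map_range]

theorem intList_comp {S : Type*} [CommRing S] (g : R → S) (f : ℤ → R) (a b : ℤ) :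
    intList (fun t => g (f t)) a b = (intList f a b).map g := by
  simp only [intList_eq_map_range, List.map_map, Function.comp_def]

theorem intList_add_one (f : ℤ → R) {a b : ℤ} (h : a ≤ b + 1) :
    intList f a (b + 1) = intList f a b ++ [f (b + 1)] := by
  rw [intList_eq_map_range, intList_eq_map_range,
    show (b + 1 + 1 - a).toNat = (b + 1 - a).toNat + 1 by omega, List.range_succ, List.map_append,
    List.map_singleton, show a + ((b + 1 - a).toNat : ℕ) = b + 1 by omega]

/-- Truncation at `j ≤ N` of the coefficient of `t ^ n` in `H_l(t) E_l(-t) = 1`. -/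
def heConv (l : List R) (n : ℤ) (N : ℕ) : R :=
  ∑ j ∈ range (N + 1), hsymL l (n - j) * esymL (l.map Neg.neg) j

theorem heConv_append_singleton (l : List R) (x : R) (n : ℤ) (N : ℕ) :
    heConv (l ++ [x]) n (N + 1) =
      heConv l n N + hsymL (l ++ [x]) (n - (N + 1)) * esymL (l.map Neg.neg) (N + 1) := by
  set g : ℕ → R := fun j => x * hsymL (l ++ [x]) (n - j) * esymL (l.map Neg.neg) (j - 1) with hg
  have hterm : ∀ j : ℕ, hsymL (l ++ [x]) (n - j) * esymL ((l ++ [x]).map Neg.neg) j =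
      hsymL l (n - j) * esymL (l.map Neg.neg) j + (g (j + 1) - g j) := fun j => by
    rw [List.map_append, List.map_singleton, esymL_append_singleton]
    simp only [hg, Nat.cast_add, Nat.cast_one, add_sub_cancel_right, sub_add_eq_sub_sub]
    linear_combination esymL (l.map Neg.neg) j * hsymL_append_singleton l x (n - j)
  have hg0 : g 0 = 0 := by simp [hg, esymL_of_neg]
  rw [heConv, sum_congr rfl fun j _ => hterm j, sum_add_distrib, sum_range_sub, hg0,
    sum_range_succ, ← heConv, hsymL_append_singleton l x (n - (N + 1))]
  simp only [hg, Nat.cast_add, Nat.cast_one, add_sub_cancel_right, sub_sub]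
  ring

theorem heConv_of_le (l : List R) {n : ℤ} {N M : ℕ} (hn : n ≤ N) (hNM : N ≤ M) :
    heConv l n M = heConv l n N := by
  refine (sum_subset (range_subset_range.2 (by omega)) fun j hjM hjN => ?_).symm
  rw [mem_range] at hjM hjN
  rw [hsymL_of_neg _ (by omega), zero_mul]

theorem heConv_length (l : List R) (n : ℤ) : heConv l n l.length = if n = 0 then 1 else 0 := by
  induction l using List.reverseRecOn generalizing n with
  | nil =>
    split_ifs with hn
    · simp [heConv, hn, hsymL_zero, esymL_zero]
    · simp [heConv, hsymL_nil hn]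
  | append_singleton l x ih =>
    rw [List.length_append, List.length_singleton, heConv_append_singleton, ih,
      esymL_of_length_lt _ (by simp), mul_zero, add_zero]

theorem sum_Icc_eq_heConv (α : ℤ → R) {q b k : ℤ} (hq : 0 ≤ q) (hk : q ≤ k) :
    ∑ r ∈ Icc q k, hI α 0 r (b - r) * eI (fun t => -α t) 0 (r - 1) (r - q) =
      heConv (intList α 0 k) (b - q) (k - q).toNat := by
  induction k, hk using Int.leInduction with
  | base => simp [heConv, hI, eI, esymL_zero]
  | succ k hk ih =>
    rw [← insert_Icc_right_eq_Icc_add_one (by omega), sum_insert (by simp), ih, add_comm,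
      show (k + 1 - q).toNat = (k - q).toNat + 1 by omega, intList_add_one α (by omega),
      heConv_append_singleton, hI, eI, add_sub_cancel_right, intList_comp Neg.neg α,
      intList_add_one α (by omega), Int.toNat_of_nonneg (by omega : 0 ≤ k - q),
      show b - q - (k - q + 1) = b - (k + 1) by ring, show k - q + 1 = k + 1 - q by ring]

/-- Coefficient-wise form of ⟨∅|ψ(z|α)ψ*(w|α)|∅⟩ = z/(z−w): for b ≥ q ≥ 0,
∑_{r=q}^{b} h_{b−r}(α_0,…,α_r) e_{r−q}(−α_0,…,−α_{r−1}) = δ_{qb}. -/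
theorem vacuum_expectation_coeff (α : ℤ → R) (q b : ℤ) (hq : 0 ≤ q) (hb : q ≤ b) :
    (∑ r ∈ Finset.Icc q b,
      hI α 0 r (b - r) * eI (fun t => -α t) 0 (r - 1) (r - q))
      = if q = b then 1 else 0 := by
  have hlen : (b - q).toNat ≤ (intList α 0 b).length := by rw [intList_length]; omega
  rw [sum_Icc_eq_heConv α hq hb, ← heConv_of_le _ (by omega) hlen, heConv_length]
  simp only [sub_eq_zero, eq_comm]
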